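/- arXiv:2001.08066 — 8 statements merged into one kernel-verified Lean document; each statement's English description precedes it below -/
import Mathlib

section
/- Let a, b be positive integers with gcd(a,b) = 1 and both a, b odd or of opposite parity so that (a-1)(b-1)/2 is an integer (which holds automatically since a, b coprime implies not both even, and (a-1)(b-1) is always even when gcd(a,b)=1). Then exactly one of the two equations x*a + y*b = (a-1)(b-1)/2 and x*a + y*b + 1 = (a-1)(b-1)/2 has a solution in nonnegative integers x, y. -/
/-!
Sylvester: for coprime positive `a, b`, exactly one of `n` and `ab - a - b - n` is a nonnegative
integer combination of `a` and `b`. Both cannot be, since adding the combinations would represent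
`ab - a - b`, which forces `b ∣ x + 1` and `a ∣ y + 1` and hence `xa + yb ≥ 2ab - a - b`. One of
them is, because `n = xa + yb` with `0 ≤ x < b`, and if `y < 0` then
`ab - a - b - n = (b - 1 - x)a + (-1 - y)b`. Taking `n = (a - 1)(b - 1)/2` gives
`ab - a - b - n = n - 1`.
-/

def IsNonnegComb (a b n : ℤ) : Prop := ∃ x y : ℕ, (x : ℤ) * a + y * b = n

namespace IsCoprime

variable {a b : ℤ}

theorem exists_nonneg_lt_mul_add_mul_eq (hab : IsCoprime a b) (hb : 0 < b) (n : ℤ) :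
    ∃ x y : ℤ, 0 ≤ x ∧ x < b ∧ x * a + y * b = n := by
  obtain ⟨u, v, huv⟩ := hab
  refine ⟨n * u % b, n * v + n * u / b * a, Int.emod_nonneg _ hb.ne', Int.emod_lt_of_pos _ hb, ?_⟩
  linear_combination a * Int.emod_add_mul_ediv (n * u) b + n * huv

theorem not_isNonnegComb_mul_sub_sub (hab : IsCoprime a b) (ha : 0 < a) (hb : 0 < b) :
    ¬ IsNonnegComb a b (a * b - a - b) := by
  rintro ⟨x, y, h⟩
  have hbx : b ∣ x + 1 := hab.symm.dvd_of_dvd_mul_right ⟨a - (y + 1), by linear_combination h⟩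
  have hay : a ∣ y + 1 := hab.dvd_of_dvd_mul_right ⟨b - (x + 1), by linear_combination h⟩
  have hbx' := Int.le_of_dvd (by positivity) hbx
  have hay' := Int.le_of_dvd (by positivity) hay
  nlinarith

theorem xor_isNonnegComb_sub (hab : IsCoprime a b) (ha : 0 < a) (hb : 0 < b) (n : ℤ) :
    Xor (IsNonnegComb a b n) (IsNonnegComb a b (a * b - a - b - n)) := by
  rw [xor_iff_or_and_not_and]
  constructor
  · obtain ⟨x, y, hx, hxb, hn⟩ := hab.exists_nonneg_lt_mul_add_mul_eq hb n
    lift x to ℕ using hx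
    rcases le_or_gt 0 y with hy | hy
    · lift y to ℕ using hy
      exact Or.inl ⟨x, y, hn⟩
    · lift b - 1 - x to ℕ using (by omega) with x' hx'
      lift -1 - y to ℕ using (by omega) with y' hy'
      exact Or.inr ⟨x', y', by rw [hx', hy']; linear_combination -hn⟩
  · rintro ⟨⟨x₁, y₁, h₁⟩, ⟨x₂, y₂, h₂⟩⟩
    exact hab.not_isNonnegComb_mul_sub_sub ha hb
      ⟨x₁ + x₂, y₁ + y₂, by push_cast; linear_combination h₁ + h₂⟩

end IsCoprime

theorem Nat.Coprime.two_dvd_pred_mul_pred {a b : ℕ} (hab : a.Coprime b) :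
    2 ∣ (a - 1) * (b - 1) := by
  rcases Nat.even_or_odd a with ha | ⟨k, rfl⟩
  · have hb : ¬ 2 ∣ b := fun h2b => by
      simpa [hab.gcd_eq_one] using Nat.dvd_gcd ha.two_dvd h2b
    exact (show 2 ∣ b - 1 by omega).mul_left _
  · exact (show 2 ∣ 2 * k + 1 - 1 by omega).mul_right _

theorem stmt_0_general (a b : ℕ) (hab : Nat.gcd a b = 1) :
    Xor' (∃ x y : ℕ, x * a + y * b = (a - 1) * (b - 1) / 2)
         (∃ x y : ℕ, x * a + y * b + 1 = (a - 1) * (b - 1) / 2) := by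
  set N := (a - 1) * (b - 1) / 2
  show Xor _ _
  by_cases h0 : a = 0 ∨ b = 0
  · have hN : N = 0 := by rcases h0 with rfl | rfl <;> simp [N]
    rw [hN]
    exact Or.inl ⟨⟨0, 0, by simp⟩, fun ⟨x, y, h⟩ => by omega⟩
  have hN : 2 * N = (a - 1) * (b - 1) :=
    Nat.mul_div_cancel' (Nat.Coprime.two_dvd_pred_mul_pred hab)
  have hNz : (a : ℤ) * b - a - b - N = N - 1 := by
    zify [show 1 ≤ a by omega, show 1 ≤ b by omega] at hN
    linear_combination -hN
  have key := (Nat.isCoprime_iff_coprime.mpr hab).xor_isNonnegComb_sub (by omega) (by omega) N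
  rw [hNz] at key
  convert key using 1 <;> refine exists₂_congr fun x y => ?_ <;> omega

theorem stmt_0 (a b : ℕ) (ha : 0 < a) (hb : 0 < b) (hab : Nat.gcd a b = 1) :
    Xor' (∃ x y : ℕ, x * a + y * b = (a - 1) * (b - 1) / 2)
         (∃ x y : ℕ, x * a + y * b + 1 = (a - 1) * (b - 1) / 2) :=
  stmt_0_general a b hab
end

section
/- Let a, b be positive integers with gcd(a,b) = 1. If the equation x*a + y*b = (a-1)(b-1)/2 has a solution in nonnegative integers, then that solution is unique. -/
lemma aux_key (a b : ℕ) (ha : 0 < a) (hb : 0 < b) (hab : Nat.gcd a b = 1)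
    (x₁ y₁ x₂ y₂ : ℕ) (hx : x₂ ≤ x₁)
    (heq : x₁ * a + y₁ * b = x₂ * a + y₂ * b)
    (hlt : x₁ * a + y₁ * b < a * b) : x₁ = x₂ := by
  by_contra hne
  have hxx : x₂ < x₁ := lt_of_le_of_ne hx (Ne.symm hne)
  have hy : y₁ * b ≤ y₂ * b := by
    have : x₂ * a ≤ x₁ * a := Nat.mul_le_mul_right a hx
    omega
  have hkey : (x₁ - x₂) * a = (y₂ - y₁) * b := by
    have : y₁ ≤ y₂ := Nat.le_of_mul_le_mul_right (by omega) hb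
    have hyy : y₁ * b ≤ y₂ * b := Nat.mul_le_mul_right b this
    rw [Nat.sub_mul, Nat.sub_mul]
    omega
  have hbd : b ∣ (x₁ - x₂) * a := ⟨y₂ - y₁, by rw [hkey]; ring⟩
  have hbd2 : b ∣ (x₁ - x₂) := by
    exact (Nat.Coprime.dvd_of_dvd_mul_right (Nat.coprime_comm.mp hab) hbd)
  have hge : b ≤ x₁ - x₂ := Nat.le_of_dvd (by omega) hbd2
  have : b * a ≤ x₁ * a := by
    calc b * a ≤ (x₁ - x₂) * a := Nat.mul_le_mul_right a hge
    _ ≤ x₁ * a := Nat.mul_le_mul_right a (by omega)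
  nlinarith

theorem stmt_1 (a b : ℕ) (ha : 0 < a) (hb : 0 < b) (hab : Nat.gcd a b = 1)
    (x₁ y₁ x₂ y₂ : ℕ)
    (h₁ : x₁ * a + y₁ * b = (a - 1) * (b - 1) / 2)
    (h₂ : x₂ * a + y₂ * b = (a - 1) * (b - 1) / 2) :
    x₁ = x₂ ∧ y₁ = y₂ := by
  have hn : (a - 1) * (b - 1) / 2 < a * b := by
    have h1 : (a - 1) * (b - 1) / 2 ≤ (a - 1) * (b - 1) := Nat.div_le_self _ _
    have h2 : (a - 1) * (b - 1) < a * b := by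
      calc (a - 1) * (b - 1) ≤ (a - 1) * b := Nat.mul_le_mul_left _ (by omega)
      _ < a * b := by
        have := Nat.mul_lt_mul_of_lt_of_le (show a - 1 < a by omega) (le_refl b) hb
        exact this
    omega
  have heq : x₁ * a + y₁ * b = x₂ * a + y₂ * b := by rw [h₁, h₂]
  have hx : x₁ = x₂ := by
    rcases le_total x₂ x₁ with h | h
    · exact aux_key a b ha hb hab x₁ y₁ x₂ y₂ h heq (by omega)
    · exact (aux_key a b ha hb hab x₂ y₂ x₁ y₁ h heq.symm (by omega)).symm
  subst hx
  refine ⟨rfl, ?_⟩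
  have : y₁ * b = y₂ * b := by omega
  exact Nat.eq_of_mul_eq_mul_right hb this
end

section
/- Let p, q be distinct primes. Then (p-1)(q-1)/2 can be written in exactly one way as α*q + β*p + δ with integers 0 ≤ α ≤ p-1, β ≥ 0, and δ ∈ {0,1}. -/
theorem stmt_4 (p q : ℕ) (hp : p.Prime) (hq : q.Prime) (hne : p ≠ q) :
    ∃! t : ℕ × ℕ × ℕ, t.1 ≤ p - 1 ∧ t.2.2 ≤ 1 ∧
      t.1 * q + t.2.1 * p + t.2.2 = (p - 1) * (q - 1) / 2 := by
  have hp1 : 1 < p := hp.one_lt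
  have hq1 : 1 < q := hq.one_lt
  have hpq : ¬ p ∣ q := fun h => hne ((Nat.prime_dvd_prime_iff_eq hp hq).mp h)
  have hdvd2 : 2 ∣ (p - 1) * (q - 1) := by
    rcases hp.eq_two_or_odd' with h2 | ⟨k, hk⟩
    · rcases hq.eq_two_or_odd' with h2' | ⟨k, hk⟩
      · exact absurd (h2.trans h2'.symm) hne
      · exact Dvd.dvd.mul_left ⟨k, by omega⟩ _
    · exact Dvd.dvd.mul_right ⟨k, by omega⟩ _
  set n := (p - 1) * (q - 1) / 2 with hn
  have h2n : 2 * n = (p - 1) * (q - 1) := Nat.mul_div_cancel' hdvd2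
  have f1 : (p - 1) * q = p * q - q := Nat.sub_one_mul p q
  have f2 : (p - 1) * (q - 1) = (p - 1) * q - (p - 1) := Nat.mul_sub_one _ _
  have f3 : q ≤ p * q := Nat.le_mul_of_pos_left q hp.pos
  have f4 : p - 1 ≤ (p - 1) * q := Nat.le_mul_of_pos_right _ hq.pos
  have hkey : (p - 1) * (q - 1) + p + q = p * q + 1 := by omega
  haveI : Fact p.Prime := ⟨hp⟩
  have hq0 : (q : ZMod p) ≠ 0 := fun h => hpq ((ZMod.natCast_eq_zero_iff q p).mp h)
  -- uniqueness helper: mixed δ is impossible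
  have nomix : ∀ a b a' b' : ℕ, a ≤ p-1 → a' ≤ p-1 →
      a*q + b*p = n → a'*q + b'*p + 1 = n → False := by
    intro a b a' b' ha ha' h1 h2
    have hr : (a+a'+1)*q + (b+b'+1)*p = a*q + a'*q + b*p + b'*p + q + p := by ring
    have hsum : (a+a'+1)*q + (b+b'+1)*p = p*q := by omega
    have hX : p ∣ (a+a'+1)*q := by
      have hY : p ∣ (b+b'+1)*p := dvd_mul_left p _
      have hXY : p ∣ (a+a'+1)*q + (b+b'+1)*p := hsum ▸ dvd_mul_right p q
      exact (Nat.dvd_add_iff_left hY).mpr hXY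
    have hpa : p ∣ a+a'+1 := (hp.dvd_mul.mp hX).resolve_right hpq
    obtain ⟨m, hm⟩ := hpa
    have hm1 : m = 1 := by
      rcases Nat.lt_or_ge m 2 with hlt | hge
      · interval_cases m
        · omega
        · rfl
      · have := Nat.mul_le_mul_left p hge
        omega
    subst hm1
    have hap : a + a' + 1 = p := by omega
    have hb0 : 0 < (b+b'+1)*p := Nat.mul_pos (by omega) hp.pos
    have hrw : (a+a'+1)*q = p*q := by rw [hap]
    omega
  have key : ∀ s t : ℕ×ℕ×ℕ, (s.1 ≤ p-1 ∧ s.2.2 ≤ 1 ∧ s.1*q+s.2.1*p+s.2.2 = n) →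
      (t.1 ≤ p-1 ∧ t.2.2 ≤ 1 ∧ t.1*q+t.2.1*p+t.2.2 = n) → s = t := by
    rintro ⟨a, b, d⟩ ⟨a', b', d'⟩ ⟨hsa, hsd, hseq⟩ ⟨hta, htd, hteq⟩
    simp only at hsa hsd hseq hta htd hteq
    have same : (a*q + b*p = a'*q + b'*p) → (a = a' ∧ b = b') := by
      intro h
      have hcast : (a : ZMod p) = a' := by
        have hc := congrArg (Nat.cast (R := ZMod p)) h
        push_cast at hc
        simp only [ZMod.natCast_self, mul_zero, add_zero] at hc
        exact mul_right_cancel₀ hq0 hc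
      have haa : a = a' := by
        have h1 := ZMod.val_cast_of_lt (show a < p by omega)
        have h2 := ZMod.val_cast_of_lt (show a' < p by omega)
        rw [← h1, ← h2, hcast]
      subst haa
      have hbp : b * p = b' * p := by omega
      exact ⟨rfl, Nat.eq_of_mul_eq_mul_right hp.pos hbp⟩
    interval_cases d <;> interval_cases d'
    · obtain ⟨h1, h2⟩ := same (by omega); simp [h1, h2]
    · exact absurd (nomix a b a' b' hsa hta (by omega) (by omega)) not_false
    · exact absurd (nomix a' b' a b hta hsa (by omega) (by omega)) not_false
    · obtain ⟨h1, h2⟩ := same (by omega); simp [h1, h2]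
  -- existence
  set a : ℕ := ((n : ZMod p) * (q : ZMod p)⁻¹).val with hadef
  have ha_lt : a < p := ZMod.val_lt _
  have ha : (a : ZMod p) * q = n := by
    rw [hadef, ZMod.natCast_val, ZMod.cast_id]
    field_simp
  have hmod : a * q ≡ n [MOD p] := by
    rw [← ZMod.natCast_eq_natCast_iff]
    push_cast
    exact ha
  rcases le_or_gt (a*q) n with hle | hgt
  · obtain ⟨b, hb⟩ := (Nat.modEq_iff_dvd' hle).mp hmod
    have hmc : p * b = b * p := mul_comm p b
    have hsum : a * q + b * p + 0 = n := by omega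
    have hc1 : a ≤ p - 1 := by omega
    have hc2 : (0:ℕ) ≤ 1 := by omega
    exact ⟨(a, b, 0), ⟨hc1, hc2, hsum⟩,
      fun y hy => key y (a, b, 0) hy ⟨hc1, hc2, hsum⟩⟩
  · obtain ⟨k, hk⟩ := (Nat.modEq_iff_dvd' hgt.le).mp hmod.symm
    have hk1 : 1 ≤ k := by
      rcases Nat.eq_zero_or_pos k with h | h
      · subst h; simp at hk; omega
      · exact h
    have htp : p ≤ p * k := Nat.le_mul_of_pos_right p hk1
    have hkp : (k-1)*p = k*p - p := Nat.sub_one_mul k p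
    have hkc : k*p = p*k := mul_comm k p
    have hexp : (p-1-a)*q + a*q = (p-1)*q := by
      rw [← Nat.add_mul]
      congr 1
      omega
    have hsum : (p-1-a) * q + (k-1) * p + 1 = n := by omega
    have hc1 : p - 1 - a ≤ p - 1 := by omega
    have hc2 : (1:ℕ) ≤ 1 := le_refl 1
    exact ⟨(p-1-a, k-1, 1), ⟨hc1, hc2, hsum⟩,
      fun y hy => key y (p-1-a, k-1, 1) hy ⟨hc1, hc2, hsum⟩⟩
end

section
/- For every integer k ≥ 1: ((F(6k-1)-1)/2)*F(6k) + ((F(6k-1)-1)/2)*F(6k+1) = (F(6k)-1)*(F(6k+1)-1)/2. -/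
/-!
Put `a = F(6k-1)`, `b = F(6k)`, `c = F(6k+1) = a + b`. Since `6k` is even, Cassini's identity
reads `c * a = b ^ 2 + 1`; since `3 ∣ 6k`, `b` is even, so `c * a` and hence `a` is odd.
Doubling both sides, the claim becomes `(a - 1) (b + c) = (b - 1) (c - 1)`, which after
substituting `c = a + b` is exactly Cassini's identity.
-/

theorem Nat.even_fib_of_three_dvd {n : ℕ} (h : 3 ∣ n) : Even (Nat.fib n) :=
  even_iff_two_dvd.mpr (Nat.fib_dvd 3 n h)

theorem Nat.fib_add_two_mul_fib_of_odd {n : ℕ} (hn : Odd n) :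
    Nat.fib (n + 2) * Nat.fib n = Nat.fib (n + 1) ^ 2 + 1 := by
  have h := Int.fib_succ_mul_fib_pred_sub_fib_sq ((n + 1 : ℕ) : ℤ)
  rw [Int.natAbs_natCast, (Nat.even_add_one.mpr (Nat.not_even_iff_odd.mpr hn)).neg_one_pow,
    show ((n + 1 : ℕ) : ℤ) + 1 = ((n + 2 : ℕ) : ℤ) by push_cast; ring,
    show ((n + 1 : ℕ) : ℤ) - 1 = n by push_cast; ring] at h
  simp only [Int.fib_natCast] at h
  zify
  linarith

theorem pred_div_two_mul_add_pred_div_two_mul {a b c : ℕ} (hb : Even b) (hc : c = a + b)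
    (h : c * a = b ^ 2 + 1) : (a - 1) / 2 * b + (a - 1) / 2 * c = (b - 1) * (c - 1) / 2 := by
  have hca : Odd (c * a) := h ▸ (Nat.even_pow.mpr ⟨hb, two_ne_zero⟩).add_one
  obtain ⟨s, rfl⟩ := (Nat.odd_mul.mp hca).2
  subst hc
  rw [show (2 * s + 1 - 1) / 2 = s by omega]
  rcases b.eq_zero_or_pos with rfl | hb0
  · obtain rfl : s = 0 := by nlinarith
    rfl
  · have key : (b - 1) * (2 * s + 1 + b - 1) = 2 * (s * b + s * (2 * s + 1 + b)) := by
      zify [hb0, show 1 ≤ 2 * s + 1 + b by omega] at h ⊢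
      linear_combination -h
    omega

theorem stmt_7 (k : ℕ) (hk : 1 ≤ k) :
    (Nat.fib (6 * k - 1) - 1) / 2 * Nat.fib (6 * k) +
      (Nat.fib (6 * k - 1) - 1) / 2 * Nat.fib (6 * k + 1) =
    (Nat.fib (6 * k) - 1) * (Nat.fib (6 * k + 1) - 1) / 2 := by
  obtain ⟨n, hn⟩ : ∃ n, 6 * k = n + 1 := ⟨6 * k - 1, by omega⟩
  rw [hn, Nat.add_sub_cancel]
  apply pred_div_two_mul_add_pred_div_two_mul
  · exact Nat.even_fib_of_three_dvd ⟨2 * k, by omega⟩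
  · exact Nat.fib_add_two
  · exact Nat.fib_add_two_mul_fib_of_odd ⟨3 * k - 1, by omega⟩
end

section
/- For every integer k ≥ 1: ((F(6k+1)-1)/2)*F(6k+1) + ((F(6k-1)-1)/2)*F(6k+2) = (F(6k+1)-1)*(F(6k+2)-1)/2. -/
lemma fib_parity (n : ℕ) : Nat.fib (3*n) % 2 = 0 ∧ Nat.fib (3*n+1) % 2 = 1 ∧ Nat.fib (3*n+2) % 2 = 1 := by
  induction n with
  | zero => decide
  | succ n ih =>
    have h1 : Nat.fib (3*n+3) = Nat.fib (3*n+1) + Nat.fib (3*n+2) := by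
      rw [show 3*n+3 = (3*n+1)+2 by ring, Nat.fib_add_two]
    have h2 : Nat.fib (3*n+4) = Nat.fib (3*n+2) + Nat.fib (3*n+3) := by
      rw [show 3*n+4 = (3*n+2)+2 by ring, Nat.fib_add_two]
    have h3 : Nat.fib (3*n+5) = Nat.fib (3*n+3) + Nat.fib (3*n+4) := by
      rw [show 3*n+5 = (3*n+3)+2 by ring, Nat.fib_add_two]
    have e1 : 3*(n+1) = 3*n+3 := by ring
    have e2 : 3*(n+1)+1 = 3*n+4 := by ring
    have e3 : 3*(n+1)+2 = 3*n+5 := by ring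
    rw [e1, show 3*n+3+1 = 3*n+4 from rfl, show 3*n+3+2 = 3*n+5 from rfl]
    omega

lemma fib_cassini (n : ℕ) : Nat.fib (2*n+1) * Nat.fib (2*n+3) = Nat.fib (2*n+2)^2 + 1 := by
  induction n with
  | zero => decide
  | succ n ih =>
    have h1 : Nat.fib (2*n+3) = Nat.fib (2*n+1) + Nat.fib (2*n+2) := by
      rw [show 2*n+3 = (2*n+1)+2 by ring, Nat.fib_add_two]
    have h2 : Nat.fib (2*n+4) = Nat.fib (2*n+2) + Nat.fib (2*n+3) := by
      rw [show 2*n+4 = (2*n+2)+2 by ring, Nat.fib_add_two]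
    have h3 : Nat.fib (2*n+5) = Nat.fib (2*n+3) + Nat.fib (2*n+4) := by
      rw [show 2*n+5 = (2*n+3)+2 by ring, Nat.fib_add_two]
    have e1 : 2*(n+1)+1 = 2*n+3 := by ring
    have e2 : 2*(n+1)+2 = 2*n+4 := by ring
    have e3 : 2*(n+1)+3 = 2*n+5 := by ring
    rw [e1, e2, e3, h3, h2, h1]
    rw [h1] at ih
    zify at ih ⊢
    linear_combination ih

theorem stmt_8 (k : ℕ) (hk : 1 ≤ k) :
    (Nat.fib (6 * k + 1) - 1) / 2 * Nat.fib (6 * k + 1) +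
      (Nat.fib (6 * k - 1) - 1) / 2 * Nat.fib (6 * k + 2) =
    (Nat.fib (6 * k + 1) - 1) * (Nat.fib (6 * k + 2) - 1) / 2 := by
  obtain ⟨m, rfl⟩ : ∃ m, k = m + 1 := ⟨k - 1, by omega⟩
  have i1 : 6 * (m+1) + 1 = 3*(2*m+2)+1 := by ring
  have i2 : 6 * (m+1) + 2 = 3*(2*m+2)+2 := by ring
  have i3 : 6 * (m+1) - 1 = 3*(2*m+1)+2 := by omega
  -- parity
  have p1 := (fib_parity (2*m+2)).2.1
  have p2 := (fib_parity (2*m+2)).2.2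
  have p3 := (fib_parity (2*m+1)).2.2
  -- cassini at n = 3m+2 : fib(6m+5)*fib(6m+7) = fib(6m+6)^2+1
  have cass := fib_cassini (3*m+2)
  have j1 : 2*(3*m+2)+1 = 6*(m+1)-1 := by omega
  have j2 : 2*(3*m+2)+2 = 6*(m+1) := by ring
  have j3 : 2*(3*m+2)+3 = 6*(m+1)+1 := by ring
  rw [j1, j2, j3] at cass
  -- fib recurrences linking 6k-1, 6k, 6k+1, 6k+2
  have r1 : Nat.fib (6*(m+1)+1) = Nat.fib (6*(m+1)-1) + Nat.fib (6*(m+1)) := by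
    have h := Nat.fib_add_two (n := 6*(m+1)-1)
    rw [show 6*(m+1)-1+2 = 6*(m+1)+1 by omega, show 6*(m+1)-1+1 = 6*(m+1) by omega] at h
    exact h
  have r2 : Nat.fib (6*(m+1)+2) = Nat.fib (6*(m+1)) + Nat.fib (6*(m+1)+1) := by
    rw [show 6*(m+1)+2 = (6*(m+1))+2 by ring, Nat.fib_add_two]
  rw [← i1] at p1; rw [← i2] at p2; rw [← i3] at p3
  set a := Nat.fib (6*(m+1)+1) with ha
  set b := Nat.fib (6*(m+1)+2) with hb
  set c := Nat.fib (6*(m+1)-1) with hc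
  set d := Nat.fib (6*(m+1)) with hd
  -- key: a*a + c*b = a*b + 1
  have key : a * a + c * b = a * b + 1 := by
    have : c * a = d^2 + 1 := cass
    zify at this r1 r2 ⊢
    nlinarith [this, r1, r2]
  obtain ⟨x, hx⟩ : ∃ x, a = 2*x+1 := ⟨a/2, by omega⟩
  obtain ⟨y, hy⟩ : ∃ y, b = 2*y+1 := ⟨b/2, by omega⟩
  obtain ⟨z, hz⟩ : ∃ z, c = 2*z+1 := ⟨c/2, by omega⟩
  rw [hx, hy, hz] at key ⊢
  have lhs1 : (2*x+1-1)/2 = x := by omega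
  have lhs2 : (2*z+1-1)/2 = z := by omega
  have rhs1 : (2*x+1-1)*(2*y+1-1)/2 = 2*(x*y) := by
    rw [show 2*x+1-1 = 2*x by omega, show 2*y+1-1 = 2*y by omega,
      show 2*x*(2*y) = 2*(2*(x*y)) by ring]
    omega
  rw [lhs1, lhs2, rhs1]
  ring_nf at key ⊢
  linarith [key]
end

section
/- For every integer k ≥ 1: 1 + ((F(6k+4)-1)/2)*F(6k+4) + ((F(6k+2)-1)/2)*F(6k+5) = (F(6k+4)-1)*(F(6k+5)-1)/2. -/
lemma fib_mod2 (m : ℕ) : Nat.fib (3*m) % 2 = 0 ∧ Nat.fib (3*m+1) % 2 = 1 ∧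
    Nat.fib (3*m+2) % 2 = 1 := by
  induction m with
  | zero => decide
  | succ m ih =>
    have h1 : Nat.fib (3*m+2) = Nat.fib (3*m) + Nat.fib (3*m+1) := Nat.fib_add_two
    have h2 : Nat.fib (3*m+3) = Nat.fib (3*m+1) + Nat.fib (3*m+2) := Nat.fib_add_two
    have h3 : Nat.fib (3*m+4) = Nat.fib (3*m+2) + Nat.fib (3*m+3) := Nat.fib_add_two
    have h4 : Nat.fib (3*m+5) = Nat.fib (3*m+3) + Nat.fib (3*m+4) := Nat.fib_add_two
    have e1 : 3*(m+1) = 3*m+3 := by ring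
    rw [e1, show 3*m+3+1 = 3*m+4 from rfl, show 3*m+3+2 = 3*m+5 from rfl]
    omega

lemma cassini (n : ℕ) : (Nat.fib (n+1) : ℤ)^2 - Nat.fib n * Nat.fib (n+2) = (-1)^n := by
  induction n with
  | zero => simp
  | succ n ih =>
    have c1 : (Nat.fib (n+2) : ℤ) = Nat.fib n + Nat.fib (n+1) := by
      exact_mod_cast (Nat.fib_add_two (n := n))
    have c2 : (Nat.fib (n+3) : ℤ) = Nat.fib (n+1) + Nat.fib (n+2) := by
      exact_mod_cast (Nat.fib_add_two (n := n+1))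
    rw [pow_succ]
    linear_combination (-1 : ℤ)*ih - (Nat.fib (n+1):ℤ)*c2 + (Nat.fib (n+2):ℤ)*c1

theorem stmt_11 (k : ℕ) (hk : 1 ≤ k) :
    1 + (Nat.fib (6 * k + 4) - 1) / 2 * Nat.fib (6 * k + 4) +
      (Nat.fib (6 * k + 2) - 1) / 2 * Nat.fib (6 * k + 5) =
    (Nat.fib (6 * k + 4) - 1) * (Nat.fib (6 * k + 5) - 1) / 2 := by
  obtain ⟨-, -, hB⟩ := fib_mod2 (2*k)
  obtain ⟨-, hA, hC⟩ := fib_mod2 (2*k+1)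
  rw [show 3*(2*k)+2 = 6*k+2 from by ring] at hB
  rw [show 3*(2*k+1)+1 = 6*k+4 from by ring] at hA
  rw [show 3*(2*k+1)+2 = 6*k+5 from by ring] at hC
  obtain ⟨a, ha⟩ : ∃ a, Nat.fib (6*k+4) = 2*a+1 := ⟨Nat.fib (6*k+4) / 2, by omega⟩
  obtain ⟨b, hb⟩ : ∃ b, Nat.fib (6*k+2) = 2*b+1 := ⟨Nat.fib (6*k+2) / 2, by omega⟩
  obtain ⟨c, hc⟩ : ∃ c, Nat.fib (6*k+5) = 2*c+1 := ⟨Nat.fib (6*k+5) / 2, by omega⟩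
  have cas := cassini (6*k+2)
  have c1 : (Nat.fib (6*k+4) : ℤ) = Nat.fib (6*k+2) + Nat.fib (6*k+3) := by
    exact_mod_cast (Nat.fib_add_two (n := 6*k+2))
  have c2 : (Nat.fib (6*k+5) : ℤ) = Nat.fib (6*k+3) + Nat.fib (6*k+4) := by
    exact_mod_cast (Nat.fib_add_two (n := 6*k+3))
  rw [show 6*k+2+1 = 6*k+3 from rfl, show 6*k+2+2 = 6*k+4 from rfl] at cas
  rw [ha, hb] at c1
  rw [ha, hc] at c2
  rw [hb] at cas
  rw [ha] at cas
  rw [ha, hb, hc]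
  have key : 1 + a*(2*a+1) + b*(2*c+1) = 2*(a*c) := by
    have h : (1 + (a:ℤ)*(2*a+1) + b*(2*c+1) : ℤ) = 2*((a:ℤ)*c) := by
      push_cast at c1 c2 cas ⊢
      have hneg : ((-1:ℤ)^(6*k+2)) = 1 := by
        rw [show 6*k+2 = 2*(3*k+1) from by ring, pow_mul]; norm_num
      rw [hneg] at cas
      nlinarith [cas, c1, c2]
    exact_mod_cast h
  simp only [Nat.add_sub_cancel]
  rw [show 2*a/2 = a from by omega, show 2*b/2 = b from by omega,
    show 2*a*(2*c) = 2*(2*(a*c)) from by ring, Nat.mul_div_cancel_left _ (by norm_num)]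
  omega
end

section
/- For every integer k ≥ 1, the equation F(6k)*x + F(6k+1)*y = (F(6k)-1)*(F(6k+1)-1)/2 has a unique solution in nonnegative integers, and that solution is x = y = (F(6k-1)-1)/2. -/
/-!
Write `a = F(6k)`, `b = F(6k+1)` and `c = F(6k-1) = 2s + 1`, so that `b = c + a`. Cassini's
identity `bc = a² + 1` turns `(a - 1)(b - 1)/2` into `(a + b)s`, so `x = y = s` is a solution.
Conversely `a(x - s) = b(s - y)` with `a, b` coprime forces `b ∣ x - s`, and as `s` is smaller
than both `a` and `b` this leaves only `x = s`.
-/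

namespace Nat

theorem even_fib_iff_three_dvd : ∀ n, Even (fib n) ↔ 3 ∣ n
  | 0 => by simp
  | 1 => by simp
  | 2 => by simp [fib_two]
  | n + 3 => by
    have h : fib (n + 3) = fib n + 2 * fib (n + 1) := by
      rw [fib_add_two, fib_add_two]; ring
    rw [h, even_add, even_fib_iff_three_dvd n]
    simp only [even_two, Even.mul_right, iff_true]
    omega

theorem fib_add_two_mul_fib_of_odd_s13 {n : ℕ} (hn : Odd n) :
    fib (n + 2) * fib n = fib (n + 1) ^ 2 + 1 := by
  have h := Int.fib_succ_mul_fib_pred_sub_fib_sq ((n + 1 : ℕ) : ℤ)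
  rw [Int.natAbs_natCast, hn.add_one.neg_one_pow,
    show ((n + 1 : ℕ) : ℤ) + 1 = (n + 2 : ℕ) by push_cast; ring,
    show ((n + 1 : ℕ) : ℤ) - 1 = n by push_cast; ring] at h
  simp only [Int.fib_natCast] at h
  exact_mod_cast sub_eq_iff_eq_add'.mp h

theorem mul_add_mul_eq_add_mul_iff {a b s x y : ℕ} (hab : Coprime a b) (hsa : s < a)
    (hsb : s < b) : a * x + b * y = (a + b) * s ↔ x = s ∧ y = s := by
  refine ⟨fun h ↦ ?_, fun ⟨hx, hy⟩ ↦ by subst hx hy; ring⟩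
  have hz : (a : ℤ) * (x - s) = b * (s - y) := by
    have h' : ((a * x + b * y : ℕ) : ℤ) = ((a + b) * s : ℕ) := congrArg _ h
    push_cast at h'; linear_combination h'
  have hbx : (b : ℤ) ∣ x - s :=
    (Int.isCoprime_iff_gcd_eq_one.mpr (by simpa using hab.symm)).dvd_of_dvd_mul_left ⟨_, hz⟩
  have hxs : (x : ℤ) - s = 0 := by
    refine Int.eq_zero_of_abs_lt_dvd hbx (abs_lt.mpr ⟨by omega, ?_⟩)
    by_contra! hbig
    nlinarith
  have hx : x = s := by omega
  subst hx
  refine ⟨rfl, Nat.eq_of_mul_eq_mul_left (by omega : 0 < b) ?_⟩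
  linarith

theorem sub_one_mul_sub_one_div_two_of_mul_eq_sq_add_one {a b c : ℕ} (hb : b = c + a)
    (hc : Odd c) (h : b * c = a ^ 2 + 1) : (a - 1) * (b - 1) / 2 = (a + b) * ((c - 1) / 2) := by
  obtain ⟨s, rfl⟩ := hc
  subst hb
  rcases a with _ | a
  · obtain rfl : s = 0 := by nlinarith
    simp
  · rw [show (2 * s + 1 - 1) / 2 = s by omega, Nat.div_eq_of_eq_mul_left two_pos]
    rw [show 2 * s + 1 + (a + 1) - 1 = a + 2 * s + 1 by omega, add_tsub_cancel_right]
    nlinarith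

end Nat

theorem stmt_13 (k : ℕ) (hk : 1 ≤ k) :
    ∀ xy : ℕ × ℕ,
      Nat.fib (6 * k) * xy.1 + Nat.fib (6 * k + 1) * xy.2 =
        (Nat.fib (6 * k) - 1) * (Nat.fib (6 * k + 1) - 1) / 2 ↔
      xy = ((Nat.fib (6 * k - 1) - 1) / 2, (Nat.fib (6 * k - 1) - 1) / 2) := by
  obtain ⟨n, hn⟩ : ∃ n, 6 * k = n + 1 := ⟨6 * k - 1, by omega⟩
  rw [hn, add_tsub_cancel_right]
  have hodd : Odd n := ⟨3 * k - 1, by omega⟩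
  have hc : Odd (Nat.fib n) := Nat.not_even_iff_odd.mp fun h ↦ by
    have := (Nat.even_fib_iff_three_dvd n).mp h; omega
  have hb : Nat.fib (n + 1 + 1) = Nat.fib n + Nat.fib (n + 1) := Nat.fib_add_two
  have hca : Nat.fib n < Nat.fib (n + 1) := Nat.fib_lt_fib_succ (by omega)
  intro xy
  rw [Nat.sub_one_mul_sub_one_div_two_of_mul_eq_sq_add_one hb hc
      (Nat.fib_add_two_mul_fib_of_odd_s13 hodd),
    Nat.mul_add_mul_eq_add_mul_iff (Nat.fib_coprime_fib_succ (n + 1)) (by omega) (by omega),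
    Prod.ext_iff]
end

section
/- For every integer k ≥ 0: 1 + ((F(6k+5)-1)/2)*F(6k+4) + ((F(6k+2)-1)/2)*F(6k+6) = (F(6k+4)-1)*(F(6k+6)-1)/2. -/
set_option maxHeartbeats 800000

lemma fib_odd_aux : ∀ n : ℕ, Nat.fib (3*n+1) % 2 = 1 ∧ Nat.fib (3*n+2) % 2 = 1 := by
  intro n
  induction n with
  | zero => simp
  | succ n ih =>
    have h1 : Nat.fib (3*n+3) = Nat.fib (3*n+1) + Nat.fib (3*n+2) := Nat.fib_add_two
    have h2 : Nat.fib (3*n+4) = Nat.fib (3*n+2) + Nat.fib (3*n+3) := Nat.fib_add_two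
    have h3 : Nat.fib (3*n+5) = Nat.fib (3*n+3) + Nat.fib (3*n+4) := Nat.fib_add_two
    have e1 : 3*(n+1)+1 = 3*n+4 := by ring
    have e2 : 3*(n+1)+2 = 3*n+5 := by ring
    rw [e1, e2]
    omega

lemma fib_cassini_aux : ∀ n : ℕ, Nat.fib (2*n+1) * Nat.fib (2*n+3) = Nat.fib (2*n+2)^2 + 1 := by
  intro n
  induction n with
  | zero => simp [Nat.fib]
  | succ n ih =>
    have h1 : Nat.fib (2*n+3) = Nat.fib (2*n+1) + Nat.fib (2*n+2) := Nat.fib_add_two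
    have h2 : Nat.fib (2*n+4) = Nat.fib (2*n+2) + Nat.fib (2*n+3) := Nat.fib_add_two
    have h3 : Nat.fib (2*n+5) = Nat.fib (2*n+3) + Nat.fib (2*n+4) := Nat.fib_add_two
    have e1 : 2*(n+1)+1 = 2*n+3 := by ring
    have e2 : 2*(n+1)+2 = 2*n+4 := by ring
    have e3 : 2*(n+1)+3 = 2*n+5 := by ring
    rw [e1, e2, e3, h3, h2, h1]
    nlinarith [ih]

theorem stmt_17 (k : ℕ) :
    1 + (Nat.fib (6 * k + 5) - 1) / 2 * Nat.fib (6 * k + 4) +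
      (Nat.fib (6 * k + 2) - 1) / 2 * Nat.fib (6 * k + 6) =
    (Nat.fib (6 * k + 4) - 1) * (Nat.fib (6 * k + 6) - 1) / 2 := by
  obtain ⟨ho1, ho2⟩ := fib_odd_aux (2*k)
  have e0 : 3*(2*k)+1 = 6*k+1 := by ring
  have e0' : 3*(2*k)+2 = 6*k+2 := by ring
  rw [e0] at ho1; rw [e0'] at ho2
  obtain ⟨a, ha⟩ : ∃ a, Nat.fib (6*k+1) = 2*a+1 := ⟨Nat.fib (6*k+1) / 2, by omega⟩
  obtain ⟨b, hb⟩ : ∃ b, Nat.fib (6*k+2) = 2*b+1 := ⟨Nat.fib (6*k+2) / 2, by omega⟩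
  have h3 : Nat.fib (6*k+3) = Nat.fib (6*k+1) + Nat.fib (6*k+2) := Nat.fib_add_two
  have h4 : Nat.fib (6*k+4) = Nat.fib (6*k+2) + Nat.fib (6*k+3) := Nat.fib_add_two
  have h5 : Nat.fib (6*k+5) = Nat.fib (6*k+3) + Nat.fib (6*k+4) := Nat.fib_add_two
  have h6 : Nat.fib (6*k+6) = Nat.fib (6*k+4) + Nat.fib (6*k+5) := Nat.fib_add_two
  have cass := fib_cassini_aux (3*k)
  have e1 : 2*(3*k)+1 = 6*k+1 := by ring
  have e2 : 2*(3*k)+2 = 6*k+2 := by ring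
  have e3 : 2*(3*k)+3 = 6*k+3 := by ring
  rw [e1, e2, e3] at cass
  have key : 4*a^2 + 4*a*b + 6*a = 4*b^2 + 2*b := by nlinarith [cass, ha, hb, h3]
  have f4 : Nat.fib (6*k+4) = 2*a + 4*b + 3 := by omega
  have f5 : Nat.fib (6*k+5) = 4*a + 6*b + 5 := by omega
  have f6 : Nat.fib (6*k+6) = 6*a + 10*b + 8 := by omega
  rw [f4, f5, f6, hb]
  have d1 : (4*a+6*b+5 - 1)/2 = 2*a+3*b+2 := by omega
  have d2 : (2*b+1 - 1)/2 = b := by omega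
  have s1 : 2*a+4*b+3-1 = 2*a+4*b+2 := by omega
  have s2 : 6*a+10*b+8-1 = 6*a+10*b+7 := by omega
  have d3 : (2*a+4*b+2) * (6*a+10*b+7) = 2 * ((a+2*b+1) * (6*a+10*b+7)) := by ring
  rw [d1, d2, s1, s2, d3, Nat.mul_div_cancel_left _ (by norm_num : 0 < 2)]
  nlinarith [key]
end
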